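/- arXiv:2006.16484 — 3 statements merged into one kernel-verified Lean document; each statement's English description precedes it below -/
import Mathlib

section
/- Let n ≥ 1. Let L, P, J_F, R₁, …, R_n be real n×n matrices with P, J_F, R₁, …, R_n symmetric, let η ∈ ℝⁿ, let ε > 0, δ > 0, s₀, s₁, …, s_n ≥ 0, and λ₀, λ₁, …, λ_n, κ₁, …, κ_n ∈ ℝ. Define M₀ := I, M_i := e_i ηᵀ for i = 1, …, n, T_j := e_j ηᵀ + η e_jᵀ for j = 1, …, n, and the 2n×2n matrix G := [[LᵀP + PL + εI + s₀δ²J_F + Σ_{m=1}^n s_m δ² R_m R_m , P + Σ_{i=0}^n λ_i M_i ],[ (P + Σ_{i=0}^n λ_i M_i)ᵀ , −s₀I − Σ_{m=1}^n s_m e_m e_mᵀ + Σ_{j=1}^n κ_j T_j ]]. Suppose G is negative semidefinite. Then for all vectors a, f ∈ ℝⁿ satisfying (i) aᵀf = 0, (ii) ηᵀf = 0, (iii) f_m² ≤ δ² aᵀ(R_m R_m)a for every m = 1, …, n (where f_m is the m-th component of f), and (iv) ‖f‖₂² ≤ δ² aᵀJ_F a, one has the dissipation inequality aᵀ(LᵀP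 + PL)a + 2 aᵀP f ≤ −ε aᵀa. -/
open Matrix

lemma vmv_mulVec {n : ℕ} (u v x : Fin n → ℝ) :
    (vecMulVec u v).mulVec x = (v ⬝ᵥ x) • u := by
  ext i
  simp [vecMulVec, mulVec, dotProduct, Finset.mul_sum, Finset.sum_mul, mul_comm,
    mul_left_comm]

lemma sum_mulVec' {n : ℕ} {ι : Type*} (t : Finset ι)
    (M : ι → Matrix (Fin n) (Fin n) ℝ) (x : Fin n → ℝ) :
    (∑ i ∈ t, M i) *ᵥ x = ∑ i ∈ t, M i *ᵥ x := by
  ext j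
  simp only [mulVec, dotProduct, Finset.sum_apply, Matrix.sum_apply, Finset.sum_mul]
  rw [Finset.sum_comm]

lemma dotProduct_sum' {n : ℕ} {ι : Type*} (t : Finset ι)
    (a : Fin n → ℝ) (v : ι → Fin n → ℝ) :
    a ⬝ᵥ (∑ i ∈ t, v i) = ∑ i ∈ t, a ⬝ᵥ v i := by
  simp only [dotProduct, Finset.sum_apply, Finset.mul_sum]
  rw [Finset.sum_comm]

/-- The key dissipation inequality (13) in the proof of Theorem 1: if the LMI matrix `G`
is negative semidefinite, then along any pair `(a, f)` satisfying the lossless,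
orthogonal-complement, and local quadratic-bound constraints one has
`aᵀ(LᵀP + PL)a + 2aᵀPf ≤ −ε aᵀa`. -/
theorem stmt6 (n : ℕ) (hn : 1 ≤ n)
    (L P JF : Matrix (Fin n) (Fin n) ℝ)
    (R : Fin n → Matrix (Fin n) (Fin n) ℝ)
    (hPsym : P.IsSymm) (hJFsym : JF.IsSymm) (hRsym : ∀ m, (R m).IsSymm)
    (η : Fin n → ℝ) (ε δ : ℝ) (hε : 0 < ε) (hδ : 0 < δ)
    (s₀ : ℝ) (s : Fin n → ℝ) (hs₀ : 0 ≤ s₀) (hs : ∀ m, 0 ≤ s m)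
    (lam₀ : ℝ) (lam κ : Fin n → ℝ)
    (B : Matrix (Fin n) (Fin n) ℝ)
    (hB : B = P + lam₀ • (1 : Matrix (Fin n) (Fin n) ℝ)
      + ∑ i, lam i • vecMulVec (Pi.single i 1) η)
    (G : Matrix (Fin n ⊕ Fin n) (Fin n ⊕ Fin n) ℝ)
    (hG : G = fromBlocks
      (Lᵀ * P + P * L + ε • (1 : Matrix (Fin n) (Fin n) ℝ) + (s₀ * δ ^ 2) • JF
        + ∑ m, (s m * δ ^ 2) • (R m * R m))
      B
      Bᵀ
      (-(s₀ • (1 : Matrix (Fin n) (Fin n) ℝ))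
        - ∑ m, s m • vecMulVec (Pi.single m 1) (Pi.single m 1)
        + ∑ j, κ j • (vecMulVec (Pi.single j 1) η + vecMulVec η (Pi.single j 1))))
    (hGneg : ∀ z : (Fin n ⊕ Fin n) → ℝ, z ⬝ᵥ G.mulVec z ≤ 0)
    (a f : Fin n → ℝ)
    (h1 : a ⬝ᵥ f = 0) (h2 : η ⬝ᵥ f = 0)
    (h3 : ∀ m, (f m) ^ 2 ≤ δ ^ 2 * (a ⬝ᵥ (R m * R m).mulVec a))
    (h4 : f ⬝ᵥ f ≤ δ ^ 2 * (a ⬝ᵥ JF.mulVec a)) :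
    a ⬝ᵥ (Lᵀ * P + P * L).mulVec a + 2 * (a ⬝ᵥ P.mulVec f) ≤ -ε * (a ⬝ᵥ a) := by
  have hfη : f ⬝ᵥ η = 0 := by rw [dotProduct_comm]; exact h2
  have key := hGneg (Sum.elim a f)
  rw [hG] at key
  rw [fromBlocks_mulVec] at key
  simp only [Sum.elim_comp_inl, Sum.elim_comp_inr, sumElim_dotProduct_sumElim,
    dotProduct_add] at key
  -- Bf term
  have hBf : a ⬝ᵥ B.mulVec f = a ⬝ᵥ P.mulVec f := by
    rw [hB]
    simp only [add_mulVec, dotProduct_add, Matrix.smul_mulVec, dotProduct_smul,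
      one_mulVec]
    have hsum : a ⬝ᵥ (∑ i, lam i • vecMulVec (Pi.single i 1) η).mulVec f = 0 := by
      rw [sum_mulVec', dotProduct_sum']
      refine Finset.sum_eq_zero fun i _ => ?_
      rw [Matrix.smul_mulVec, dotProduct_smul, vmv_mulVec, h2]
      simp
    rw [hsum, h1]
    simp
  -- Bᵀ a term
  have hBTa : f ⬝ᵥ Bᵀ.mulVec a = a ⬝ᵥ B.mulVec f := by
    rw [Matrix.mulVec_transpose, Matrix.dotProduct_mulVec, dotProduct_comm]
  -- bottom right term
  have hbr : f ⬝ᵥ ((-(s₀ • (1 : Matrix (Fin n) (Fin n) ℝ))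
        - ∑ m, s m • vecMulVec (Pi.single m 1) (Pi.single m 1)
        + ∑ j, κ j • (vecMulVec (Pi.single j 1) η + vecMulVec η (Pi.single j 1))).mulVec f)
      = -(s₀ * (f ⬝ᵥ f)) - ∑ m, s m * (f m)^2 := by
    simp only [add_mulVec, sub_mulVec, neg_mulVec, dotProduct_add, dotProduct_sub,
      dotProduct_neg, Matrix.smul_mulVec, dotProduct_smul, one_mulVec,
      sum_mulVec', dotProduct_sum', smul_eq_mul]
    have h5 : ∑ j, κ j * (f ⬝ᵥ (vecMulVec (Pi.single j 1) η).mulVec f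
        + f ⬝ᵥ (vecMulVec η (Pi.single j 1)).mulVec f) = 0 := by
      refine Finset.sum_eq_zero fun j _ => ?_
      rw [vmv_mulVec, vmv_mulVec, h2]
      simp [hfη]
    rw [h5, add_zero]
    congr 1
    refine Finset.sum_congr rfl fun m _ => ?_
    rw [vmv_mulVec]
    simp [dotProduct_single, Pi.single_apply, sq, mul_comm]
  -- top left term
  have htl : a ⬝ᵥ ((Lᵀ * P + P * L + ε • (1 : Matrix (Fin n) (Fin n) ℝ) + (s₀ * δ ^ 2) • JF
        + ∑ m, (s m * δ ^ 2) • (R m * R m)).mulVec a)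
      = a ⬝ᵥ (Lᵀ * P + P * L).mulVec a + ε * (a ⬝ᵥ a) + s₀ * δ^2 * (a ⬝ᵥ JF.mulVec a)
        + ∑ m, s m * δ^2 * (a ⬝ᵥ (R m * R m).mulVec a) := by
    simp only [add_mulVec, dotProduct_add, Matrix.smul_mulVec, dotProduct_smul,
      one_mulVec, sum_mulVec', dotProduct_sum', smul_eq_mul]
  rw [htl, hBf, hBTa, hBf, hbr] at key
  have hsn : 0 ≤ ∑ m, s m * (δ^2 * (a ⬝ᵥ (R m * R m).mulVec a) - (f m)^2) := by
    exact Finset.sum_nonneg fun m _ => mul_nonneg (hs m) (by linarith [h3 m])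
  have hexp : ∑ m, s m * (δ^2 * (a ⬝ᵥ (R m * R m).mulVec a) - (f m)^2)
      = ∑ m, s m * δ^2 * (a ⬝ᵥ (R m * R m).mulVec a) - ∑ m, s m * (f m)^2 := by
    rw [← Finset.sum_sub_distrib]
    exact Finset.sum_congr rfl fun m _ => by ring
  rw [hexp] at hsn
  nlinarith [mul_nonneg hs₀ (by linarith : (0:ℝ) ≤ δ^2 * (a ⬝ᵥ JF.mulVec a) - f ⬝ᵥ f)]
end

section
/- Let n ≥ 1. Let L be a real n×n matrix, f : ℝⁿ → ℝⁿ a function, η ∈ ℝⁿ, and R₁, …, R_n, J_F symmetric real n×n matrices, and suppose that for all x ∈ ℝⁿ: xᵀf(x) = 0 and ηᵀf(x) = 0, and that for all x with ‖x‖₂ ≤ δ: (f(x))_m² ≤ δ² xᵀ(R_m R_m)x for each m = 1, …, n and ‖f(x)‖₂² ≤ δ² xᵀJ_F x, where δ > 0. Suppose there exist a symmetric real n×n matrix P, scalars ε > 0, s₀, s₁, …, s_n ≥ 0, and λ₀, λ₁, …, λ_n, κ₁, …, κ_n ∈ ℝ such that P − εI is positive semidefinite and the 2n×2n matrix G :=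 [[LᵀP + PL + εI + s₀δ²J_F + Σ_{m=1}^n s_m δ² R_m R_m , P + Σ_{i=0}^n λ_i M_i ],[ (P + Σ_{i=0}^n λ_i M_i)ᵀ , −s₀I − Σ_{m=1}^n s_m e_m e_mᵀ + Σ_{j=1}^n κ_j T_j ]] is negative semidefinite, where M₀ := I, M_i := e_i ηᵀ (i = 1, …, n), T_j := e_j ηᵀ + η e_jᵀ (j = 1, …, n). Set δ_f := δ √(μ_min(P)/μ_max(P)). Then every differentiable trajectory a : [0,∞) → ℝⁿ satisfying a′(t) = L a(t) + f(a(t)) for all t ≥ 0 and ‖a(0)‖₂ ≤ δ_f converges to the origin: a(t) → 0 as t → ∞. -/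
/-!
`V(x) = xᵀPx` is a quadratic Lyapunov function. Testing `G ≤ 0` on the vector `(x, f x)` is an
S-procedure: the constraints `xᵀf(x) = ηᵀf(x) = 0` kill the multipliers `λ_i` and `κ_j`, and on the
ball `‖x‖₂ ≤ δ` the local bounds make the `s`-terms nonnegative, so there `V̇ ≤ -ε‖x‖₂²`.
Since `μ_min‖x‖₂² ≤ V(x) ≤ μ_max‖x‖₂²` with `μ_min ≥ ε > 0`, the sublevel set `{V ≤ μ_min δ²}`
lies in that ball and contains the ball of radius `δ_f`. It is forward invariant, because `V̇ < 0`
on its boundary, and inside it `V̇ ≤ -(ε / μ_max) V`, so `V` decays exponentially by Grönwall.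
-/

open Matrix Filter Topology

theorem image_le_of_hasDerivAt_neg_of_eq {W W' : ℝ → ℝ} {c : ℝ}
    (hW : ∀ t, 0 ≤ t → HasDerivAt W (W' t) t) (h0 : W 0 ≤ c)
    (hneg : ∀ t, 0 ≤ t → W t = c → W' t < 0) {t : ℝ} (ht : 0 ≤ t) : W t ≤ c :=
  image_le_of_deriv_right_lt_deriv_boundary (B := fun _ => c) (B' := fun _ => 0)
    (fun s hs => (hW s hs.1).continuousAt.continuousWithinAt)
    (fun s hs => (hW s hs.1).hasDerivWithinAt) h0 (fun _ => hasDerivAt_const _ _)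
    (fun s hs => hneg s hs.1) ⟨ht, le_rfl⟩

theorem image_le_mul_exp_of_hasDerivAt_le {W W' : ℝ → ℝ} {K : ℝ}
    (hW : ∀ t, 0 ≤ t → HasDerivAt W (W' t) t) (hle : ∀ t, 0 ≤ t → W' t ≤ K * W t)
    {t : ℝ} (ht : 0 ≤ t) : W t ≤ W 0 * Real.exp (K * t) := by
  have := le_gronwallBound_of_liminf_deriv_right_le (f := W) (f' := W') (δ := W 0) (K := K)
    (ε := 0) (a := 0) (b := t)
    (fun s hs => (hW s hs.1).continuousAt.continuousWithinAt)
    (fun s hs _ hr => (hW s hs.1).hasDerivWithinAt.liminf_right_slope_le hr) le_rfl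
    (fun s hs => by simpa using hle s hs.1) t ⟨ht, le_rfl⟩
  simpa [gronwallBound_ε0] using this

section Lyapunov

variable {ι : Type*} [Fintype ι]

theorem HasDerivAt.dotProduct {u v : ℝ → ι → ℝ} {u' v' : ι → ℝ} {t : ℝ}
    (hu : HasDerivAt u u' t) (hv : HasDerivAt v v' t) :
    HasDerivAt (fun t => u t ⬝ᵥ v t) (u' ⬝ᵥ v t + u t ⬝ᵥ v') t :=
  (HasDerivAt.fun_sum (u := Finset.univ) fun i _ =>
    (hasDerivAt_pi.1 hu i).fun_mul (hasDerivAt_pi.1 hv i)).congr_deriv Finset.sum_add_distrib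

theorem HasDerivAt.matrix_mulVec {u : ℝ → ι → ℝ} {u' : ι → ℝ} {t : ℝ}
    (M : Matrix ι ι ℝ) (hu : HasDerivAt u u' t) :
    HasDerivAt (fun t => M *ᵥ u t) (M *ᵥ u') t :=
  hasDerivAt_pi.2 fun i => by
    simpa only [mulVec, zero_dotProduct, zero_add] using (hasDerivAt_const t (M i)).dotProduct hu

theorem tendsto_zero_of_tendsto_dotProduct_self {α : Type*} {l : Filter α} {a : α → ι → ℝ}
    (h : Tendsto (fun t => a t ⬝ᵥ a t) l (𝓝 0)) : Tendsto a l (𝓝 0) := by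
  refine squeeze_zero_norm (fun t => ?_) (by simpa using h.sqrt)
  exact (pi_norm_le_iff_of_nonneg (Real.sqrt_nonneg _)).2 fun i => Real.abs_le_sqrt <|
    (sq (a t i)).trans_le <| Finset.single_le_sum (f := fun j => a t j * a t j)
      (fun j _ => mul_self_nonneg _) (Finset.mem_univ i)

theorem tendsto_zero_of_quadratic_lyapunov {P : Matrix ι ι ℝ} {F : (ι → ℝ) → ι → ℝ}
    {a : ℝ → ι → ℝ} {μ₁ μ₂ ε δ : ℝ} (hμ₁ : 0 < μ₁) (hμ₂ : 0 < μ₂) (hε : 0 < ε) (hδ : 0 < δ)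
    (hlower : ∀ x, μ₁ * (x ⬝ᵥ x) ≤ x ⬝ᵥ P *ᵥ x) (hupper : ∀ x, x ⬝ᵥ P *ᵥ x ≤ μ₂ * (x ⬝ᵥ x))
    (hdecr : ∀ x, √(x ⬝ᵥ x) ≤ δ → F x ⬝ᵥ P *ᵥ x + x ⬝ᵥ P *ᵥ F x ≤ -(ε * (x ⬝ᵥ x)))
    (hderiv : ∀ t, 0 ≤ t → HasDerivAt a (F (a t)) t)
    (hinit : √(a 0 ⬝ᵥ a 0) ≤ δ * √(μ₁ / μ₂)) :
    Tendsto a atTop (𝓝 0) := by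
  set W : ℝ → ℝ := fun t => a t ⬝ᵥ P *ᵥ a t
  set k := ε / μ₂
  have hW : ∀ t, 0 ≤ t → HasDerivAt W (F (a t) ⬝ᵥ P *ᵥ a t + a t ⬝ᵥ P *ᵥ F (a t)) t :=
    fun t ht => (hderiv t ht).dotProduct ((hderiv t ht).matrix_mulVec P)
  have hW0 : W 0 ≤ μ₁ * δ ^ 2 := by
    have h := (Real.sqrt_le_left (by positivity)).1 hinit
    rw [mul_pow, Real.sq_sqrt (by positivity)] at h
    calc W 0 ≤ μ₂ * (a 0 ⬝ᵥ a 0) := hupper _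
      _ ≤ μ₂ * (δ ^ 2 * (μ₁ / μ₂)) := by gcongr
      _ = μ₁ * δ ^ 2 := by field_simp
  have hdecr_of_le : ∀ t, W t ≤ μ₁ * δ ^ 2 →
      F (a t) ⬝ᵥ P *ᵥ a t + a t ⬝ᵥ P *ᵥ F (a t) ≤ -(ε * (a t ⬝ᵥ a t)) := fun t h =>
    hdecr _ <| (Real.sqrt_le_left hδ.le).2 <| le_of_mul_le_mul_left ((hlower _).trans h) hμ₁
  have hinv : ∀ t, 0 ≤ t → W t ≤ μ₁ * δ ^ 2 := fun t ht =>
    image_le_of_hasDerivAt_neg_of_eq hW hW0 (fun s _ hs => by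
      have h : W s ≤ μ₂ * (a s ⬝ᵥ a s) := hupper (a s)
      rw [hs] at h
      have := pos_of_mul_pos_right (h.trans_lt' (by positivity)) hμ₂.le
      linarith [hdecr_of_le s hs.le, mul_pos hε this]) ht
  have hk : k * μ₂ = ε := div_mul_cancel₀ ε hμ₂.ne'
  have hdecay : ∀ t, 0 ≤ t → W t ≤ W 0 * Real.exp (-k * t) := fun t ht =>
    image_le_mul_exp_of_hasDerivAt_le hW (fun s hs => by
      have : k * W s ≤ ε * (a s ⬝ᵥ a s) := by
        calc k * W s ≤ k * (μ₂ * (a s ⬝ᵥ a s)) := by gcongr; exact hupper (a s)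
          _ = ε * (a s ⬝ᵥ a s) := by rw [← mul_assoc, hk]
      linarith [hdecr_of_le s (hinv s hs)]) ht
  have hlim : Tendsto (fun t => W 0 / μ₁ * Real.exp (-k * t)) atTop (𝓝 0) := by
    simpa [neg_mul] using (Real.tendsto_exp_neg_atTop_nhds_zero.comp
      (tendsto_id.const_mul_atTop (by positivity : 0 < k))).const_mul (W 0 / μ₁)
  refine tendsto_zero_of_tendsto_dotProduct_self <| squeeze_zero'
    (Eventually.of_forall fun t => Finset.sum_nonneg fun i _ => mul_self_nonneg (a t i))
    ((eventually_ge_atTop 0).mono fun t ht => ?_) hlim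
  rw [div_mul_eq_mul_div, le_div_iff₀ hμ₁, mul_comm]
  exact (hlower _).trans (hdecay t ht)

end Lyapunov

namespace Matrix.IsHermitian

variable {ι : Type*} [Fintype ι] [DecidableEq ι] {P : Matrix ι ι ℝ}

theorem dotProduct_mulVec_eq_sum_eigenvalues (hP : P.IsHermitian) (x : ι → ℝ) :
    x ⬝ᵥ P *ᵥ x =
      ∑ i, hP.eigenvalues i * ((hP.eigenvectorUnitary : Matrix ι ι ℝ)ᵀ *ᵥ x) i ^ 2 := by
  set U : Matrix ι ι ℝ := (hP.eigenvectorUnitary : Matrix ι ι ℝ)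
  have hU : star U = Uᵀ := by rw [star_eq_conjTranspose, conjTranspose_eq_transpose_of_trivial]
  conv_lhs => rw [hP.spectral_theorem]
  rw [Unitary.conjStarAlgAut_apply, ← mulVec_mulVec, ← mulVec_mulVec, dotProduct_mulVec x U,
    ← mulVec_transpose, hU]
  simp [dotProduct, mulVec_diagonal, sq, mul_left_comm]

theorem dotProduct_self_transpose_eigenvectorUnitary_mulVec (hP : P.IsHermitian) (x : ι → ℝ) :
    ((hP.eigenvectorUnitary : Matrix ι ι ℝ)ᵀ *ᵥ x) ⬝ᵥ ((hP.eigenvectorUnitary : Matrix ι ι ℝ)ᵀ *ᵥ x)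
      = x ⬝ᵥ x := by
  have h := mem_unitaryGroup_iff.mp hP.eigenvectorUnitary.2
  rw [star_eq_conjTranspose, conjTranspose_eq_transpose_of_trivial] at h
  rw [dotProduct_transpose_mulVec, mulVec_mulVec, h, one_mulVec]

theorem inf'_eigenvalues_mul_le (hP : P.IsHermitian) (hne : (Finset.univ : Finset ι).Nonempty)
    (x : ι → ℝ) : Finset.univ.inf' hne hP.eigenvalues * (x ⬝ᵥ x) ≤ x ⬝ᵥ P *ᵥ x := by
  rw [hP.dotProduct_mulVec_eq_sum_eigenvalues,
    ← hP.dotProduct_self_transpose_eigenvectorUnitary_mulVec,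
    dotProduct, Finset.mul_sum]
  refine Finset.sum_le_sum fun i _ => ?_
  rw [← sq]
  exact mul_le_mul_of_nonneg_right (Finset.inf'_le _ (Finset.mem_univ i)) (sq_nonneg _)

theorem le_sup'_eigenvalues_mul (hP : P.IsHermitian) (hne : (Finset.univ : Finset ι).Nonempty)
    (x : ι → ℝ) : x ⬝ᵥ P *ᵥ x ≤ Finset.univ.sup' hne hP.eigenvalues * (x ⬝ᵥ x) := by
  rw [hP.dotProduct_mulVec_eq_sum_eigenvalues,
    ← hP.dotProduct_self_transpose_eigenvectorUnitary_mulVec,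
    dotProduct, Finset.mul_sum]
  refine Finset.sum_le_sum fun i _ => ?_
  rw [← sq]
  exact mul_le_mul_of_nonneg_right (Finset.le_sup' _ (Finset.mem_univ i)) (sq_nonneg _)

theorem le_eigenvalues_of_forall_le (hP : P.IsHermitian) {c : ℝ}
    (h : ∀ x, c * (x ⬝ᵥ x) ≤ x ⬝ᵥ P *ᵥ x) (i : ι) : c ≤ hP.eigenvalues i := by
  set U : Matrix ι ι ℝ := (hP.eigenvectorUnitary : Matrix ι ι ℝ)
  have hUU : Uᵀ * U = 1 := by
    have h := mem_unitaryGroup_iff'.mp hP.eigenvectorUnitary.2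
    rwa [star_eq_conjTranspose, conjTranspose_eq_transpose_of_trivial] at h
  have hy : Uᵀ *ᵥ (U *ᵥ Pi.single i 1) = Pi.single i 1 := by rw [mulVec_mulVec, hUU, one_mulVec]
  have hi := h (U *ᵥ Pi.single i 1)
  rw [hP.dotProduct_mulVec_eq_sum_eigenvalues,
    ← hP.dotProduct_self_transpose_eigenvectorUnitary_mulVec,
    hy] at hi
  simpa [Pi.single_apply] using hi

end Matrix.IsHermitian

section SProcedure

variable {ι : Type*} [Fintype ι] [DecidableEq ι]

/-- The matrix `G` of the LMI, with multipliers `M₀ = 1`, `M_i = e_i ηᵀ` and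
`T_j = e_j ηᵀ + η e_jᵀ`. -/
def lmiMatrix (L P JF : Matrix ι ι ℝ) (R : ι → Matrix ι ι ℝ) (η : ι → ℝ)
    (δ ε s₀ lam₀ : ℝ) (s lam κ : ι → ℝ) : Matrix (ι ⊕ ι) (ι ⊕ ι) ℝ :=
  fromBlocks
    (Lᵀ * P + P * L + ε • (1 : Matrix ι ι ℝ) + (s₀ * δ ^ 2) • JF
      + ∑ m, (s m * δ ^ 2) • (R m * R m))
    (P + lam₀ • (1 : Matrix ι ι ℝ) + ∑ i, lam i • vecMulVec (Pi.single i 1) η)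
    (P + lam₀ • (1 : Matrix ι ι ℝ) + ∑ i, lam i • vecMulVec (Pi.single i 1) η)ᵀ
    (-(s₀ • (1 : Matrix ι ι ℝ)) - ∑ m, s m • vecMulVec (Pi.single m 1) (Pi.single m 1)
      + ∑ j, κ j • (vecMulVec (Pi.single j 1) η + vecMulVec η (Pi.single j 1)))

variable {L P JF : Matrix ι ι ℝ} {R : ι → Matrix ι ι ℝ} {η x y : ι → ℝ} {δ ε s₀ lam₀ : ℝ}
  {s lam κ : ι → ℝ}

theorem sumElim_dotProduct_lmiMatrix_mulVec_sumElim (hP : P.IsSymm) (hxy : x ⬝ᵥ y = 0)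
    (hηy : η ⬝ᵥ y = 0) :
    Sum.elim x y ⬝ᵥ lmiMatrix L P JF R η δ ε s₀ lam₀ s lam κ *ᵥ Sum.elim x y
      = (L *ᵥ x + y) ⬝ᵥ P *ᵥ x + x ⬝ᵥ P *ᵥ (L *ᵥ x + y) + ε * (x ⬝ᵥ x)
        + s₀ * (δ ^ 2 * (x ⬝ᵥ JF *ᵥ x) - y ⬝ᵥ y)
        + ∑ m, s m * (δ ^ 2 * (x ⬝ᵥ (R m * R m) *ᵥ x) - y m ^ 2) := by
  have hyη : y ⬝ᵥ η = 0 := by rwa [dotProduct_comm]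
  have hPyx : y ⬝ᵥ P *ᵥ x = x ⬝ᵥ P *ᵥ y := by rw [← dotProduct_transpose_mulVec, hP.eq]
  rw [lmiMatrix, fromBlocks_mulVec, sumElim_dotProduct_sumElim]
  simp only [Sum.elim_comp_inl, Sum.elim_comp_inr, add_mulVec, ← mulVec_mulVec, smul_mulVec,
    one_mulVec, sum_mulVec, dotProduct_add, dotProduct_transpose_mulVec, dotProduct_smul,
    smul_eq_mul, dotProduct_sum, vecMulVec_mulVec, hηy, MulOpposite.op_zero, zero_smul, smul_zero,
    Finset.sum_const_zero, add_zero, hxy, mul_zero, smul_add, sub_mulVec, neg_mulVec,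
    single_dotProduct, one_mul, op_smul_eq_smul, zero_add, dotProduct_sub, dotProduct_neg,
    dotProduct_single, mul_one, hyη, add_dotProduct, mulVec_add]
  rw [hPyx, dotProduct_comm (P *ᵥ x)]
  simp only [mul_sub, Finset.sum_sub_distrib, sq, mul_assoc]
  ring

theorem lyapunov_derivative_le_of_lmi (hP : P.IsSymm) (hxy : x ⬝ᵥ y = 0) (hηy : η ⬝ᵥ y = 0)
    (hR : ∀ m, y m ^ 2 ≤ δ ^ 2 * (x ⬝ᵥ (R m * R m) *ᵥ x))
    (hJF : y ⬝ᵥ y ≤ δ ^ 2 * (x ⬝ᵥ JF *ᵥ x)) (hs₀ : 0 ≤ s₀) (hs : ∀ m, 0 ≤ s m)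
    (hG : Sum.elim x y ⬝ᵥ lmiMatrix L P JF R η δ ε s₀ lam₀ s lam κ *ᵥ Sum.elim x y ≤ 0) :
    (L *ᵥ x + y) ⬝ᵥ P *ᵥ x + x ⬝ᵥ P *ᵥ (L *ᵥ x + y) ≤ -(ε * (x ⬝ᵥ x)) := by
  rw [sumElim_dotProduct_lmiMatrix_mulVec_sumElim hP hxy hηy] at hG
  have h₀ : 0 ≤ s₀ * (δ ^ 2 * (x ⬝ᵥ JF *ᵥ x) - y ⬝ᵥ y) := mul_nonneg hs₀ (sub_nonneg.2 hJF)
  have hm : 0 ≤ ∑ m, s m * (δ ^ 2 * (x ⬝ᵥ (R m * R m) *ᵥ x) - y m ^ 2) :=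
    Finset.sum_nonneg fun m _ => mul_nonneg (hs m) (sub_nonneg.2 (hR m))
  linarith

end SProcedure

theorem stmt8_general (n : ℕ) (hn : 1 ≤ n)
    (L : Matrix (Fin n) (Fin n) ℝ)
    (f : (Fin n → ℝ) → (Fin n → ℝ))
    (η : Fin n → ℝ)
    (R : Fin n → Matrix (Fin n) (Fin n) ℝ) (JF : Matrix (Fin n) (Fin n) ℝ)
    (δ : ℝ) (hδ : 0 < δ)
    (hlossless : ∀ x : Fin n → ℝ, x ⬝ᵥ f x = 0)
    (horth : ∀ x : Fin n → ℝ, η ⬝ᵥ f x = 0)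
    (hlocal1 : ∀ x : Fin n → ℝ, Real.sqrt (x ⬝ᵥ x) ≤ δ →
      ∀ m, (f x m) ^ 2 ≤ δ ^ 2 * (x ⬝ᵥ (R m * R m).mulVec x))
    (hlocal2 : ∀ x : Fin n → ℝ, Real.sqrt (x ⬝ᵥ x) ≤ δ →
      f x ⬝ᵥ f x ≤ δ ^ 2 * (x ⬝ᵥ JF.mulVec x))
    (P : Matrix (Fin n) (Fin n) ℝ) (hP : P.IsHermitian)
    (ε : ℝ) (hε : 0 < ε)
    (s₀ : ℝ) (s : Fin n → ℝ) (hs₀ : 0 ≤ s₀) (hs : ∀ m, 0 ≤ s m)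
    (lam₀ : ℝ) (lam κ : Fin n → ℝ)
    (hPpos : ∀ x : Fin n → ℝ,
      0 ≤ x ⬝ᵥ (P - ε • (1 : Matrix (Fin n) (Fin n) ℝ)).mulVec x)
    (hGneg : ∀ z : (Fin n ⊕ Fin n) → ℝ,
      z ⬝ᵥ (fromBlocks
        (Lᵀ * P + P * L + ε • (1 : Matrix (Fin n) (Fin n) ℝ) + (s₀ * δ ^ 2) • JF
          + ∑ m, (s m * δ ^ 2) • (R m * R m))
        (P + lam₀ • (1 : Matrix (Fin n) (Fin n) ℝ)
          + ∑ i, lam i • vecMulVec (Pi.single i 1) η)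
        (P + lam₀ • (1 : Matrix (Fin n) (Fin n) ℝ)
          + ∑ i, lam i • vecMulVec (Pi.single i 1) η)ᵀ
        (-(s₀ • (1 : Matrix (Fin n) (Fin n) ℝ))
          - ∑ m, s m • vecMulVec (Pi.single m 1) (Pi.single m 1)
          + ∑ j, κ j • (vecMulVec (Pi.single j 1) η
            + vecMulVec η (Pi.single j 1)))).mulVec z ≤ 0)
    (δf : ℝ)
    (hδf : δf = δ * Real.sqrt
      (Finset.univ.inf' (Finset.univ_nonempty_iff.mpr ⟨⟨0, hn⟩⟩) hP.eigenvalues /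
        Finset.univ.sup' (Finset.univ_nonempty_iff.mpr ⟨⟨0, hn⟩⟩) hP.eigenvalues))
    (a : ℝ → (Fin n → ℝ))
    (hderiv : ∀ t : ℝ, 0 ≤ t → HasDerivAt a (L.mulVec (a t) + f (a t)) t)
    (hinit : Real.sqrt (a 0 ⬝ᵥ a 0) ≤ δf) :
    Filter.Tendsto a Filter.atTop (nhds 0) := by
  have hne : (Finset.univ : Finset (Fin n)).Nonempty := Finset.univ_nonempty_iff.mpr ⟨⟨0, hn⟩⟩
  have hεP : ∀ x, ε * (x ⬝ᵥ x) ≤ x ⬝ᵥ P *ᵥ x := fun x => by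
    simpa [sub_mulVec, dotProduct_sub, smul_mulVec] using hPpos x
  have hμ₁ : 0 < Finset.univ.inf' hne hP.eigenvalues :=
    hε.trans_le (Finset.le_inf' _ _ fun i _ => hP.le_eigenvalues_of_forall_le hεP i)
  have hμ₁₂ : Finset.univ.inf' hne hP.eigenvalues ≤ Finset.univ.sup' hne hP.eigenvalues :=
    (Finset.inf'_le _ (Finset.mem_univ ⟨0, hn⟩)).trans (Finset.le_sup' _ (Finset.mem_univ _))
  refine tendsto_zero_of_quadratic_lyapunov (F := fun x => L *ᵥ x + f x) hμ₁
    (hμ₁.trans_le hμ₁₂) hε hδ (hP.inf'_eigenvalues_mul_le hne) (hP.le_sup'_eigenvalues_mul hne)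
    (fun x hx => ?_) hderiv (hδf ▸ hinit)
  exact lyapunov_derivative_le_of_lmi (isHermitian_iff_isSymm.mp hP) (hlossless x) (horth x)
    (hlocal1 x hx) (hlocal2 x hx) hs₀ hs (hGneg _)

/-- Theorem 1, the main result of the paper: feasibility of the LMIs certifies that the
ball of radius `δ_f = δ√(μ_min(P)/μ_max(P))` lies in the region of attraction of the
origin for the Lur'e-type system `ȧ = La + f(a)` whose lossless nonlinearity satisfies
`aᵀf(a) = 0`, `ηᵀf(a) = 0`, and the local quadratic bounds of Lemma 1 on `‖a‖₂ ≤ δ`. -/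
theorem stmt8 (n : ℕ) (hn : 1 ≤ n)
    (L : Matrix (Fin n) (Fin n) ℝ)
    (f : (Fin n → ℝ) → (Fin n → ℝ))
    (η : Fin n → ℝ)
    (R : Fin n → Matrix (Fin n) (Fin n) ℝ) (JF : Matrix (Fin n) (Fin n) ℝ)
    (hRsym : ∀ m, (R m).IsSymm) (hJFsym : JF.IsSymm)
    (δ : ℝ) (hδ : 0 < δ)
    (hlossless : ∀ x : Fin n → ℝ, x ⬝ᵥ f x = 0)
    (horth : ∀ x : Fin n → ℝ, η ⬝ᵥ f x = 0)
    (hlocal1 : ∀ x : Fin n → ℝ, Real.sqrt (x ⬝ᵥ x) ≤ δ →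
      ∀ m, (f x m) ^ 2 ≤ δ ^ 2 * (x ⬝ᵥ (R m * R m).mulVec x))
    (hlocal2 : ∀ x : Fin n → ℝ, Real.sqrt (x ⬝ᵥ x) ≤ δ →
      f x ⬝ᵥ f x ≤ δ ^ 2 * (x ⬝ᵥ JF.mulVec x))
    (P : Matrix (Fin n) (Fin n) ℝ) (hP : P.IsHermitian)
    (ε : ℝ) (hε : 0 < ε)
    (s₀ : ℝ) (s : Fin n → ℝ) (hs₀ : 0 ≤ s₀) (hs : ∀ m, 0 ≤ s m)
    (lam₀ : ℝ) (lam κ : Fin n → ℝ)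
    (hPpos : ∀ x : Fin n → ℝ,
      0 ≤ x ⬝ᵥ (P - ε • (1 : Matrix (Fin n) (Fin n) ℝ)).mulVec x)
    (hGneg : ∀ z : (Fin n ⊕ Fin n) → ℝ,
      z ⬝ᵥ (fromBlocks
        (Lᵀ * P + P * L + ε • (1 : Matrix (Fin n) (Fin n) ℝ) + (s₀ * δ ^ 2) • JF
          + ∑ m, (s m * δ ^ 2) • (R m * R m))
        (P + lam₀ • (1 : Matrix (Fin n) (Fin n) ℝ)
          + ∑ i, lam i • vecMulVec (Pi.single i 1) η)
        (P + lam₀ • (1 : Matrix (Fin n) (Fin n) ℝ)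
          + ∑ i, lam i • vecMulVec (Pi.single i 1) η)ᵀ
        (-(s₀ • (1 : Matrix (Fin n) (Fin n) ℝ))
          - ∑ m, s m • vecMulVec (Pi.single m 1) (Pi.single m 1)
          + ∑ j, κ j • (vecMulVec (Pi.single j 1) η
            + vecMulVec η (Pi.single j 1)))).mulVec z ≤ 0)
    (δf : ℝ)
    (hδf : δf = δ * Real.sqrt
      (Finset.univ.inf' (Finset.univ_nonempty_iff.mpr ⟨⟨0, hn⟩⟩) hP.eigenvalues /
        Finset.univ.sup' (Finset.univ_nonempty_iff.mpr ⟨⟨0, hn⟩⟩) hP.eigenvalues))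
    (a : ℝ → (Fin n → ℝ))
    (hderiv : ∀ t : ℝ, 0 ≤ t → HasDerivAt a (L.mulVec (a t) + f (a t)) t)
    (hinit : Real.sqrt (a 0 ⬝ᵥ a 0) ≤ δf) :
    Filter.Tendsto a Filter.atTop (nhds 0) :=
  stmt8_general n hn L f η R JF δ hδ hlossless horth hlocal1 hlocal2 P hP ε hε s₀ s hs₀ hs lam₀ lam
    κ hPpos hGneg δf hδf a hderiv hinit
end

section
/- Let n ≥ 1 and let L be a real n×n matrix. Suppose there exist a symmetric real n×n matrix P, a scalar ε > 0, and λ₀ ∈ ℝ such that P − εI is positive semidefinite and the 2n×2n block matrix G_E := [[LᵀP + PL + εI, P + λ₀I],[P + λ₀I, 0]] is negative semidefinite. Then Lᵀ + L is negative definite, i.e., xᵀ(Lᵀ + L)x < 0 for every nonzero x ∈ ℝⁿ. -/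
open Matrix

lemma aux_bzero (a b : ℝ) (h : ∀ t : ℝ, a + 2 * t * b ≤ 0) : b = 0 := by
  by_contra hb
  have hc := h ((1 - a) / (2 * b))
  have he : (2:ℝ) * ((1 - a) / (2 * b)) * b = 1 - a := by
    field_simp
  rw [he] at hc
  linarith

/-- Recovering classical energy stability: if `P − εI ⪰ 0` and the energy-stability form
`G_E = [[LᵀP + PL + εI, P + λ₀I],[P + λ₀I, 0]]` is negative semidefinite, then
`Lᵀ + L` is negative definite. -/
theorem stmt10 (n : ℕ) (hn : 1 ≤ n)
    (L P : Matrix (Fin n) (Fin n) ℝ) (hP : P.IsSymm)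
    (ε : ℝ) (hε : 0 < ε) (lam₀ : ℝ)
    (hPpos : ∀ x : Fin n → ℝ, 0 ≤ x ⬝ᵥ (P - ε • (1 : Matrix (Fin n) (Fin n) ℝ)).mulVec x)
    (hGE : ∀ z : (Fin n ⊕ Fin n) → ℝ,
      z ⬝ᵥ (fromBlocks (Lᵀ * P + P * L + ε • (1 : Matrix (Fin n) (Fin n) ℝ))
        (P + lam₀ • (1 : Matrix (Fin n) (Fin n) ℝ))
        (P + lam₀ • (1 : Matrix (Fin n) (Fin n) ℝ)) 0).mulVec z ≤ 0) :
    ∀ x : Fin n → ℝ, x ≠ 0 → x ⬝ᵥ (Lᵀ + L).mulVec x < 0 := by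
  set A := Lᵀ * P + P * L + ε • (1 : Matrix (Fin n) (Fin n) ℝ) with hA
  set B := P + lam₀ • (1 : Matrix (Fin n) (Fin n) ℝ) with hB
  have hBsymm : B.IsSymm := by
    rw [Matrix.IsSymm, hB, transpose_add, hP.eq, transpose_smul, transpose_one]
  -- expand hGE
  have key : ∀ (x y : Fin n → ℝ) (t : ℝ),
      x ⬝ᵥ A.mulVec x + 2 * t * (x ⬝ᵥ B.mulVec y) ≤ 0 := by
    intro x y t
    have hsy : y ⬝ᵥ B.mulVec x = x ⬝ᵥ B.mulVec y := by
      rw [dotProduct_mulVec, ← mulVec_transpose, hBsymm.eq, dotProduct_comm]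
    have h := hGE (Sum.elim x (t • y))
    rw [fromBlocks_mulVec, sumElim_dotProduct_sumElim] at h
    simp only [Sum.elim_comp_inl, Sum.elim_comp_inr, mulVec_smul, zero_mulVec, add_zero,
      dotProduct_add, dotProduct_smul, smul_dotProduct, smul_eq_mul, dotProduct_zero,
      mul_zero] at h
    rw [hsy] at h
    linarith
  -- B = 0 as bilinear form
  have hbil : ∀ x y : Fin n → ℝ, x ⬝ᵥ P.mulVec y = -lam₀ * (x ⬝ᵥ y) := by
    intro x y
    have h0 := aux_bzero _ _ (fun t => key x y t)
    rw [hB, add_mulVec, smul_mulVec, one_mulVec, dotProduct_add,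
      dotProduct_smul, smul_eq_mul] at h0
    linarith
  -- A negative semidefinite
  have hAle : ∀ x : Fin n → ℝ, x ⬝ᵥ A.mulVec x ≤ 0 := by
    intro x
    have := key x x 0
    linarith
  intro x hx
  have hxx : 0 < x ⬝ᵥ x := by
    have h0 : x ⬝ᵥ x ≠ 0 := fun h => hx (dotProduct_self_eq_zero.mp h)
    have h1 : 0 ≤ x ⬝ᵥ x := Finset.sum_nonneg fun i _ => mul_self_nonneg _
    exact lt_of_le_of_ne h1 (Ne.symm h0)
  -- -lam₀ ≥ ε
  have hlam : ε ≤ -lam₀ := by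
    have h := hPpos x
    rw [sub_mulVec, smul_mulVec, one_mulVec, dotProduct_sub, dotProduct_smul,
      smul_eq_mul, hbil] at h
    nlinarith
  -- expand A
  have f1 : x ⬝ᵥ (Lᵀ * P).mulVec x = -lam₀ * ((L.mulVec x) ⬝ᵥ x) := by
    rw [← mulVec_mulVec, dotProduct_mulVec, vecMul_transpose]
    exact hbil _ _
  have f2 : x ⬝ᵥ (P * L).mulVec x = -lam₀ * (x ⬝ᵥ L.mulVec x) := by
    rw [← mulVec_mulVec, hbil]
  have f3 : x ⬝ᵥ Lᵀ.mulVec x = L.mulVec x ⬝ᵥ x := by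
    rw [dotProduct_mulVec, vecMul_transpose, dotProduct_comm]
  have hexp : x ⬝ᵥ A.mulVec x = -lam₀ * (x ⬝ᵥ (Lᵀ + L).mulVec x) + ε * (x ⬝ᵥ x) := by
    rw [hA, add_mulVec, add_mulVec, dotProduct_add, dotProduct_add, f1, f2,
      smul_mulVec, one_mulVec, dotProduct_smul, smul_eq_mul,
      add_mulVec, dotProduct_add, f3]
    ring
  have := hAle x
  rw [hexp] at this
  nlinarith
end
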